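/- Let $n\ge 2$ and $1\le k\le n$ be integers, $h\in\mathbb{R}$, $c>0$, and let $g:(a_1,a_2)\to\mathbb{R}$ be positive, differentiable with $g'(t)\ne 0$ and $(g'(t))^2 = c + g(t)^2\,(h+g(t)^{-n})^2$ for all $t$. Set $\lambda = h+g^{-n}$, $r = g/\sqrt{c}$, fix $t_0\in(a_1,a_2)$ and let $R(t)=\int_{t_0}^t r(\tau)\lambda(\tau)\,d\tau$. Let $e_1=(1,0,\dots,0)\in\mathbb{R}^{n+1}$. Then $(r')^2 - r^2\lambda^2 = 1$ on $(a_1,a_2)$, and for every $y\in\mathbb{R}^{n+1}$ with $y_1=0$ and $\langle y,y\rangle = 1$, the curves $\phi(u) = r(u)\,y + R(u)\,e_1$ and $\nu(u) = -r(u)\lambda(u)\,y - r'(u)\,e_1$ satisfy: $\langle\phi',\phi'\rangle\equiv 1$, $\langle\nu,\nu\rangle\equiv -1$, $\langle\nu,\phi'\rangle\equiv 0$, $\langle\nu(u),v\rangle = 0$ for every $v\in\mathbb{R}^{n+1}$ with $v_1=0$ and $\langle v,y\rangle = 0$, and $\nu'(u) = -(nh-(n-1)\lambda(u))\,\phi'(u)$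 for all $u$. -/

import Mathlib

/-!
Put `F = r λ` and `N = n h - (n - 1) λ`. The equation for `g` gives `r'² = 1 + F²`, and
differentiating `g λ = h g + g^(1-n)` gives `F' = N r'`. As `r'` never vanishes, Darboux's theorem
gives it a constant sign, so `r' = ±√(1 + F²)` is differentiable with `r'' = N F`. Hence
`φ' = r' y + F e₁`, `ν = -F y - r' e₁` and `ν' = -N φ'`; since `y, e₁` span a Lorentzian plane
(`⟨y,y⟩ = 1`, `⟨e₁,e₁⟩ = -1`, `⟨y,e₁⟩ = 0`), the pair `(φ', ν)` is a boost of `(y, -e₁)`, which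
gives the three pointwise identities, and `ν` is orthogonal to every `v ⊥ y, e₁`.
-/

/-- The semi-riemannian bilinear form of index `k` on `ℝ^m`:
`⟨v,w⟩ = -v₁w₁ - ⋯ - v_k w_k + v_{k+1} w_{k+1} + ⋯ + v_m w_m`
(coordinates are 0-indexed in Lean, so the first `k` indices carry sign `-1`). -/
noncomputable def semiForm (k : ℕ) {m : ℕ} (v w : Fin m → ℝ) : ℝ :=
  ∑ i : Fin m, (if (i : ℕ) < k then (-1 : ℝ) else 1) * v i * w i

section semiForm

variable {m : ℕ} (k : ℕ)

theorem semiForm_comm (v w : Fin m → ℝ) : semiForm k v w = semiForm k w v :=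
  Finset.sum_congr rfl fun _ _ => by ring

theorem semiForm_add_left (u v w : Fin m → ℝ) :
    semiForm k (u + v) w = semiForm k u w + semiForm k v w := by
  simp only [semiForm, ← Finset.sum_add_distrib, Pi.add_apply]
  exact Finset.sum_congr rfl fun _ _ => by ring

theorem semiForm_sub_left (u v w : Fin m → ℝ) :
    semiForm k (u - v) w = semiForm k u w - semiForm k v w := by
  simp only [semiForm, ← Finset.sum_sub_distrib, Pi.sub_apply]
  exact Finset.sum_congr rfl fun _ _ => by ring

theorem semiForm_smul_left (a : ℝ) (v w : Fin m → ℝ) :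
    semiForm k (a • v) w = a * semiForm k v w := by
  simp only [semiForm, Finset.mul_sum, Pi.smul_apply, smul_eq_mul]
  exact Finset.sum_congr rfl fun _ _ => by ring

theorem semiForm_add_right (u v w : Fin m → ℝ) :
    semiForm k u (v + w) = semiForm k u v + semiForm k u w := by
  simp only [semiForm_comm k u, semiForm_add_left]

theorem semiForm_sub_right (u v w : Fin m → ℝ) :
    semiForm k u (v - w) = semiForm k u v - semiForm k u w := by
  simp only [semiForm_comm k u, semiForm_sub_left]

theorem semiForm_smul_right (a : ℝ) (v w : Fin m → ℝ) :
    semiForm k v (a • w) = a * semiForm k v w := by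
  simp only [semiForm_comm k v, semiForm_smul_left]

theorem semiForm_single_left (i : Fin m) (a : ℝ) (w : Fin m → ℝ) :
    semiForm k (Pi.single i a) w = (if (i : ℕ) < k then (-1 : ℝ) else 1) * a * w i := by
  rw [semiForm, Finset.sum_eq_single i (fun j _ hj => by simp [hj]) (by simp)]
  simp

end semiForm

theorem hasDerivAt_mul_of_eq_div_add_zpow_neg {g r lam : ℝ → ℝ} {n : ℤ} {h a t : ℝ}
    (hr : ∀ t, r t = g t / a) (hlam : ∀ t, lam t = h + g t ^ (-n))
    (hg : DifferentiableAt ℝ g t) (hg0 : g t ≠ 0) :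
    HasDerivAt (fun t => r t * lam t) ((n * h - (n - 1) * lam t) * deriv r t) t := by
  have hpow := ((hasDerivAt_zpow (-n) (g t) (Or.inl hg0)).comp t hg.hasDerivAt).const_add h
  have hcancel : g t * g t ^ (-n - 1) = g t ^ (-n) := by
    rw [← zpow_one_add₀ hg0]; ring_nf
  rw [funext hr, funext hlam, deriv_div_const]
  refine ((hg.hasDerivAt.mul hpow).div_const a).congr_of_eventuallyEq
    (Filter.Eventually.of_forall fun τ => by
      simp only [Pi.mul_apply, Function.comp_apply]; ring) |>.congr_deriv ?_
  simp only [Function.comp_apply]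
  push_cast
  linear_combination (-n * deriv g t / a) * hcancel

theorem hasDerivAt_deriv_of_deriv_sq_eq {f Q : ℝ → ℝ} {s : Set ℝ} (hs : Convex ℝ s)
    (hso : IsOpen s) (hf : ∀ t ∈ s, DifferentiableAt ℝ f t) (hf' : ∀ t ∈ s, deriv f t ≠ 0)
    (hQ : ∀ t ∈ s, deriv f t ^ 2 = Q t) {t Q' : ℝ} (ht : t ∈ s) (hQd : HasDerivAt Q Q' t) :
    HasDerivAt (deriv f) (Q' / (2 * deriv f t)) t := by
  -- By Darboux, `deriv f` has a constant sign on `s`, so it is `± √Q` there.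
  obtain ⟨σ, hσ, hσf⟩ : ∃ σ : ℝ, σ ^ 2 = 1 ∧ ∀ τ ∈ s, deriv f τ = σ * √(Q τ) := by
    rcases hasDerivWithinAt_forall_lt_or_forall_gt_of_forall_ne hs
      (fun τ hτ => (hf τ hτ).hasDerivAt.hasDerivWithinAt) hf' with hneg | hpos
    · refine ⟨-1, by norm_num, fun τ hτ => ?_⟩
      rw [← hQ τ hτ, Real.sqrt_sq_eq_abs, abs_of_neg (hneg τ hτ)]
      ring
    · refine ⟨1, by norm_num, fun τ hτ => ?_⟩
      rw [← hQ τ hτ, Real.sqrt_sq_eq_abs, abs_of_pos (hpos τ hτ)]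
      ring
  have hQt : 0 < Q t := hQ t ht ▸ pow_two_pos_of_ne_zero (hf' t ht)
  have hsqrt : √(Q t) ≠ 0 := (Real.sqrt_pos.mpr hQt).ne'
  have hderiv := ((hQd.sqrt hQt.ne').const_mul σ).congr_of_eventuallyEq
    (Filter.eventually_of_mem (hso.mem_nhds ht) hσf)
  refine hderiv.congr_deriv ?_
  have hσ0 : σ ≠ 0 := by
    rintro rfl
    norm_num at hσ
  rw [hσf t ht]
  field_simp
  linear_combination Q' * hσ

theorem hasDerivAt_deriv_of_deriv_sq_eq_one_add_sq {f F : ℝ → ℝ} {s : Set ℝ} (hs : Convex ℝ s)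
    (hso : IsOpen s) (hf : ∀ t ∈ s, DifferentiableAt ℝ f t)
    (hfF : ∀ t ∈ s, deriv f t ^ 2 = 1 + F t ^ 2) {t N : ℝ} (ht : t ∈ s)
    (hF : HasDerivAt F (N * deriv f t) t) :
    HasDerivAt (deriv f) (F t * N) t := by
  have hf' : ∀ t ∈ s, deriv f t ≠ 0 := fun t ht h0 => by
    have := hfF t ht
    rw [h0] at this
    nlinarith [sq_nonneg (F t)]
  refine (hasDerivAt_deriv_of_deriv_sq_eq hs hso hf hf' hfF ht
    ((hF.pow 2).const_add 1)).congr_deriv ?_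
  field_simp [hf' t ht]
  ring

theorem deriv_sq_eq_one_add_sq_of_eq_div_sqrt {g r : ℝ → ℝ} {c t L : ℝ} (hc : 0 < c)
    (hr : ∀ t, r t = g t / √c) (hode : deriv g t ^ 2 = c + g t ^ 2 * L ^ 2) :
    deriv r t ^ 2 = 1 + (r t * L) ^ 2 := by
  rw [hr, funext hr, deriv_div_const, div_pow, hode, div_mul_eq_mul_div, div_pow, mul_pow,
    Real.sq_sqrt hc.le]
  field_simp

theorem hasDerivAt_integral_of_continuousOn {f : ℝ → ℝ} {s : Set ℝ} (hso : IsOpen s)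
    (hs : s.OrdConnected) (hf : ContinuousOn f s) {a b : ℝ} (ha : a ∈ s) (hb : b ∈ s) :
    HasDerivAt (fun t => ∫ τ in a..t, f τ) (f b) b :=
  intervalIntegral.integral_hasDerivAt_right
    ((hf.mono (hs.uIcc_subset ha hb)).intervalIntegrable)
    (hf.stronglyMeasurableAtFilter hso b hb) (hf.continuousAt (hso.mem_nhds hb))

theorem hasDerivAt_smul_add_smul_and_neg_smul_sub_smul {E : Type*} [NormedAddCommGroup E]
    [NormedSpace ℝ E] {r R F : ℝ → ℝ} {u N : ℝ} (y e : E) (hr : DifferentiableAt ℝ r u)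
    (hR : HasDerivAt R (F u) u) (hF : HasDerivAt F (N * deriv r u) u)
    (hr' : HasDerivAt (deriv r) (F u * N) u) :
    HasDerivAt (fun t => r t • y + R t • e) (deriv r u • y + F u • e) u ∧
      HasDerivAt (fun t => (-F t) • y - deriv r t • e) ((-N) • (deriv r u • y + F u • e)) u :=
  ⟨(hr.hasDerivAt.smul_const y).add (hR.smul_const e),
    ((hF.neg.smul_const y).sub (hr'.smul_const e)).congr_deriv (by module)⟩

theorem semiForm_boost {m k : ℕ} {y e : Fin m → ℝ} (hyy : semiForm k y y = 1)
    (hye : semiForm k y e = 0) (hee : semiForm k e e = -1) {a b : ℝ} (hab : a ^ 2 = 1 + b ^ 2) :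
    semiForm k (a • y + b • e) (a • y + b • e) = 1 ∧
      semiForm k ((-b) • y - a • e) ((-b) • y - a • e) = -1 ∧
      semiForm k ((-b) • y - a • e) (a • y + b • e) = 0 := by
  have hey : semiForm k e y = 0 := semiForm_comm k y e ▸ hye
  simp only [semiForm_add_left, semiForm_sub_left, semiForm_smul_left, semiForm_add_right,
    semiForm_sub_right, semiForm_smul_right, hyy, hye, hey, hee]
  refine ⟨?_, ?_, ?_⟩
  · linear_combination hab
  · linear_combination -hab
  · ring

theorem stmt_9_general (n k : ℕ) (hk1 : 1 ≤ k)
    (h c a₁ a₂ t₀ : ℝ) (hc : 0 < c) (ht₀ : t₀ ∈ Set.Ioo a₁ a₂)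
    (g lam r R : ℝ → ℝ)
    (hgdiff : ∀ t ∈ Set.Ioo a₁ a₂, DifferentiableAt ℝ g t)
    (hgpos : ∀ t ∈ Set.Ioo a₁ a₂, 0 < g t)
    (hode : ∀ t ∈ Set.Ioo a₁ a₂,
      deriv g t ^ 2 = c + g t ^ 2 * (h + g t ^ (-(n : ℤ))) ^ 2)
    (hlam : ∀ t, lam t = h + g t ^ (-(n : ℤ)))
    (hr : ∀ t, r t = g t / Real.sqrt c)
    (hR : ∀ t, R t = ∫ τ in t₀..t, r τ * lam τ)
    (e : Fin (n + 1) → ℝ)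
    (he : ∀ i, e i = if (i : ℕ) = 0 then 1 else 0) :
    (∀ t ∈ Set.Ioo a₁ a₂, deriv r t ^ 2 - r t ^ 2 * lam t ^ 2 = 1) ∧
    ∀ y : Fin (n + 1) → ℝ,
      (∀ i : Fin (n + 1), (i : ℕ) = 0 → y i = 0) →
      semiForm k y y = 1 →
      ∀ φ ν : ℝ → Fin (n + 1) → ℝ,
        (∀ u, φ u = r u • y + R u • e) →
        (∀ u, ν u = (-(r u * lam u)) • y - deriv r u • e) →
        ∀ u ∈ Set.Ioo a₁ a₂,
          semiForm k (deriv φ u) (deriv φ u) = 1 ∧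
          semiForm k (ν u) (ν u) = -1 ∧
          semiForm k (ν u) (deriv φ u) = 0 ∧
          (∀ v : Fin (n + 1) → ℝ,
            (∀ i : Fin (n + 1), (i : ℕ) = 0 → v i = 0) →
            semiForm k v y = 0 → semiForm k (ν u) v = 0) ∧
          deriv ν u = (-((n : ℝ) * h - ((n : ℝ) - 1) * lam u)) • deriv φ u := by
  obtain rfl : e = Pi.single 0 1 := funext fun i => by
    simp only [he, Pi.single_apply, Fin.ext_iff, Fin.val_zero]
  have hrdiff : ∀ t ∈ Set.Ioo a₁ a₂, DifferentiableAt ℝ r t := fun t ht =>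
    funext hr ▸ (hgdiff t ht).div_const _
  have hunit : ∀ t ∈ Set.Ioo a₁ a₂, deriv r t ^ 2 = 1 + (r t * lam t) ^ 2 := fun t ht =>
    deriv_sq_eq_one_add_sq_of_eq_div_sqrt hc hr (hlam t ▸ hode t ht)
  have hF : ∀ t ∈ Set.Ioo a₁ a₂, HasDerivAt (fun t => r t * lam t)
      (((n : ℝ) * h - ((n : ℝ) - 1) * lam t) * deriv r t) t := fun t ht => by
    exact_mod_cast hasDerivAt_mul_of_eq_div_add_zpow_neg hr hlam (hgdiff t ht) (hgpos t ht).ne'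
  have hR' : ∀ t ∈ Set.Ioo a₁ a₂, HasDerivAt R (r t * lam t) t := fun t ht =>
    funext hR ▸ hasDerivAt_integral_of_continuousOn isOpen_Ioo Set.ordConnected_Ioo
      (fun τ hτ => (hF τ hτ).continuousAt.continuousWithinAt) ht₀ ht
  refine ⟨fun t ht => by linear_combination hunit t ht, fun y hy hyy φ ν hφ hν u hu => ?_⟩
  obtain ⟨hφ', hν'⟩ := hasDerivAt_smul_add_smul_and_neg_smul_sub_smul y (Pi.single 0 1)
    (hrdiff u hu) (hR' u hu) (hF u hu) (hasDerivAt_deriv_of_deriv_sq_eq_one_add_sq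
      (convex_Ioo a₁ a₂) isOpen_Ioo hrdiff hunit hu (hF u hu))
  have hye : semiForm k y (Pi.single 0 1) = 0 := by
    rw [semiForm_comm, semiForm_single_left, hy 0 rfl, mul_zero]
  have hee : semiForm k (Pi.single (0 : Fin (n + 1)) 1) (Pi.single 0 1) = -1 := by
    simp [semiForm_single_left, Nat.pos_of_ne_zero (Nat.one_le_iff_ne_zero.mp hk1)]
  rw [← funext hφ] at hφ'
  rw [← funext hν] at hν'
  rw [hν u, hφ'.deriv, hν'.deriv]
  obtain ⟨hφφ, hνν, hνφ⟩ := semiForm_boost hyy hye hee (hunit u hu)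
  refine ⟨hφφ, hνν, hνφ, fun v hv hvy => ?_, rfl⟩
  rw [semiForm_sub_left, semiForm_smul_left, semiForm_smul_left, semiForm_comm k y, hvy,
    semiForm_single_left, hv 0 rfl]
  ring

/-- Theorem 2.22 of the paper (a family of cmc hypersurfaces of `ℝ_k^{n+1}`).
Coordinate `1` of the paper (1-indexed) is index `0` here. -/
theorem stmt_9 (n k : ℕ) (hn : 2 ≤ n) (hk1 : 1 ≤ k) (hkn : k ≤ n)
    (h c a₁ a₂ t₀ : ℝ) (hc : 0 < c) (ht₀ : t₀ ∈ Set.Ioo a₁ a₂)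
    (g lam r R : ℝ → ℝ)
    (hgdiff : ∀ t ∈ Set.Ioo a₁ a₂, DifferentiableAt ℝ g t)
    (hgpos : ∀ t ∈ Set.Ioo a₁ a₂, 0 < g t)
    (hg' : ∀ t ∈ Set.Ioo a₁ a₂, deriv g t ≠ 0)
    (hode : ∀ t ∈ Set.Ioo a₁ a₂,
      deriv g t ^ 2 = c + g t ^ 2 * (h + g t ^ (-(n : ℤ))) ^ 2)
    (hlam : ∀ t, lam t = h + g t ^ (-(n : ℤ)))
    (hr : ∀ t, r t = g t / Real.sqrt c)
    (hR : ∀ t, R t = ∫ τ in t₀..t, r τ * lam τ)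
    (e : Fin (n + 1) → ℝ)
    (he : ∀ i, e i = if (i : ℕ) = 0 then 1 else 0) :
    (∀ t ∈ Set.Ioo a₁ a₂, deriv r t ^ 2 - r t ^ 2 * lam t ^ 2 = 1) ∧
    ∀ y : Fin (n + 1) → ℝ,
      (∀ i : Fin (n + 1), (i : ℕ) = 0 → y i = 0) →
      semiForm k y y = 1 →
      ∀ φ ν : ℝ → Fin (n + 1) → ℝ,
        (∀ u, φ u = r u • y + R u • e) →
        (∀ u, ν u = (-(r u * lam u)) • y - deriv r u • e) →
        ∀ u ∈ Set.Ioo a₁ a₂,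
          semiForm k (deriv φ u) (deriv φ u) = 1 ∧
          semiForm k (ν u) (ν u) = -1 ∧
          semiForm k (ν u) (deriv φ u) = 0 ∧
          (∀ v : Fin (n + 1) → ℝ,
            (∀ i : Fin (n + 1), (i : ℕ) = 0 → v i = 0) →
            semiForm k v y = 0 → semiForm k (ν u) v = 0) ∧
          deriv ν u = (-((n : ℝ) * h - ((n : ℝ) - 1) * lam u)) • deriv φ u :=
  stmt_9_general n k hk1 h c a₁ a₂ t₀ hc ht₀ g lam r R hgdiff hgpos hode hlam hr hR e he
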